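/- Consider sl2 over ℂ with basis X, Y, Z and brackets [Y,X] = X, [Z,X] = Y, [Z,Y] = Z, decomposed as g1 ⋈ g2 with g1 = span{X,Y}, g2 = span{Z}. Let M = S(sl2*) with the coadjoint action and the Koszul coaction (an SAYD module over sl2), and let ∇_{g1}: M → g1 ⊗ M, m ↦ X ⊗ mθ^X + Y ⊗ mθ^Y be the projection of the Koszul coaction to g1. Then ∇_{g1} is a g1-comodule structure on M, but the AYD compatibility over g1 fails: for example ∇_{g1}(m ◁ X) ≠ [X,X] ⊗ mθ^X + [Y,X] ⊗ mθ^Y + X ⊗ (mθ^X) ◁ X + Y ⊗ (mθ^Y) ◁ X, the discrepancy being the term −Y ⊗ mθ^Z. -/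

import Mathlib

/-!
The projected coaction is a Koszul-type coaction `m ↦ ∑ᵢ eᵢ ⊗ m xᵢ`, and any such coaction is
a comodule because the multipliers `xᵢ` commute. For the AYD defect, the Leibniz rule reduces
`(mθ^X) ◁ X` and `(mθ^Y) ◁ X` to `θ^X ◁ X = -θ^Y` and `θ^Y ◁ X = -θ^Z`; the latter leaves the
term `-Y ⊗ mθ^Z`, which over all of `sl₂` is cancelled by `[Z, X] ⊗ mθ^Z`, the summand the
projection to `g₁` drops.
-/

open TensorProduct LinearMap

noncomputable section

def swap12 (k g M : Type) [Field k] [AddCommGroup g] [Module k g]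
    [AddCommGroup M] [Module k M] :
    g ⊗[k] (g ⊗[k] M) →ₗ[k] g ⊗[k] (g ⊗[k] M) :=
  (TensorProduct.assoc k g g M).toLinearMap ∘ₗ
    (LinearMap.rTensor M (TensorProduct.comm k g g).toLinearMap) ∘ₗ
      (TensorProduct.assoc k g g M).symm.toLinearMap

def IsLieComodule {k g M : Type} [Field k] [AddCommGroup g] [Module k g]
    [AddCommGroup M] [Module k M] (cm : M →ₗ[k] g ⊗[k] M) : Prop :=
  (swap12 k g M) ∘ₗ (LinearMap.lTensor g cm) ∘ₗ cm = (LinearMap.lTensor g cm) ∘ₗ cm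

variable {g : Type} [LieRing g] [LieAlgebra ℂ g]

/-- The coadjoint action of `W ∈ g` on `S(g*)`, extended as a derivation. -/
def coadDer (B : Module.Basis (Fin 3) ℂ g) (W : g) :
    Derivation ℂ (MvPolynomial (Fin 3) ℂ) (MvPolynomial (Fin 3) ℂ) :=
  MvPolynomial.mkDerivation ℂ
    (fun i => ∑ j : Fin 3, (-(B.repr ⁅W, B j⁆ i)) • (MvPolynomial.X j : MvPolynomial (Fin 3) ℂ))

/-- The action `m ◁ W = -L_W(m)` (`sl₂` is unimodular, so `δ = 0`). -/
def sl2Act (B : Module.Basis (Fin 3) ℂ g) (W : g) :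
    MvPolynomial (Fin 3) ℂ →ₗ[ℂ] MvPolynomial (Fin 3) ℂ :=
  -(coadDer B W).toLinearMap

/-- The projection of the Koszul coaction onto `g₁ = span{X, Y}`:
`m ↦ X ⊗ mθ^X + Y ⊗ mθ^Y`.  (We keep its values in `g ⊗ M`.) -/
def projCoact (B : Module.Basis (Fin 3) ℂ g) :
    MvPolynomial (Fin 3) ℂ →ₗ[ℂ] g ⊗[ℂ] MvPolynomial (Fin 3) ℂ :=
  (TensorProduct.mk ℂ g _ (B 0)) ∘ₗ (LinearMap.mulRight ℂ (MvPolynomial.X 0))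
    + (TensorProduct.mk ℂ g _ (B 1)) ∘ₗ (LinearMap.mulRight ℂ (MvPolynomial.X 1))

def koszulCoaction (k : Type) {g A ι : Type} [Field k] [AddCommGroup g] [Module k g]
    [CommRing A] [Algebra k A] [Fintype ι] (e : ι → g) (x : ι → A) : A →ₗ[k] g ⊗[k] A :=
  ∑ i, TensorProduct.mk k g A (e i) ∘ₗ LinearMap.mulRight k (x i)

section Koszul

variable {k g A ι : Type} [Field k] [AddCommGroup g] [Module k g] [CommRing A] [Algebra k A]
  [Fintype ι]

lemma swap12_tmul {M : Type} [AddCommGroup M] [Module k M] (a b : g) (m : M) :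
    swap12 k g M (a ⊗ₜ[k] (b ⊗ₜ[k] m)) = b ⊗ₜ[k] (a ⊗ₜ[k] m) := by
  simp [swap12]

lemma koszulCoaction_apply (e : ι → g) (x : ι → A) (m : A) :
    koszulCoaction k e x m = ∑ i, e i ⊗ₜ[k] (m * x i) := by
  simp [koszulCoaction]

lemma isLieComodule_koszulCoaction (e : ι → g) (x : ι → A) :
    IsLieComodule (koszulCoaction k e x) := by
  ext m
  simp only [LinearMap.comp_apply, koszulCoaction_apply, map_sum, LinearMap.lTensor_tmul,
    tmul_sum, swap12_tmul]
  rw [Finset.sum_comm]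
  simp only [mul_right_comm m]

end Koszul

lemma Module.Basis.tmul_eq_zero_iff {R M N ι : Type} [CommRing R] [AddCommGroup M] [Module R M]
    [AddCommGroup N] [Module R N] (b : Module.Basis ι R M) (i : ι) (n : N) :
    b i ⊗ₜ[R] n = 0 ↔ n = 0 := by
  refine ⟨fun h => ?_, fun h => h ▸ tmul_zero _ _⟩
  simpa using
    congrArg (fun t => TensorProduct.lid R N (TensorProduct.map (b.coord i) LinearMap.id t)) h

section sl2

variable (B : Module.Basis (Fin 3) ℂ g)

lemma projCoact_eq_koszulCoaction :
    projCoact B = koszulCoaction ℂ ![B 0, B 1] ![MvPolynomial.X 0, MvPolynomial.X 1] := by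
  ext m
  simp [projCoact, koszulCoaction, Fin.sum_univ_two]

lemma sl2Act_mul (W : g) (m n : MvPolynomial (Fin 3) ℂ) :
    sl2Act B W (m * n) = sl2Act B W m * n + m * sl2Act B W n := by
  simp only [sl2Act, LinearMap.neg_apply, Derivation.coeFn_coe, Derivation.leibniz, smul_eq_mul]
  ring

lemma sl2Act_X (W : g) (i : Fin 3) :
    sl2Act B W (MvPolynomial.X i) = ∑ j, B.repr ⁅W, B j⁆ i • MvPolynomial.X j := by
  simp [sl2Act, coadDer, MvPolynomial.mkDerivation_X]

variable {B}

lemma sl2Act_X_X (hYX : ⁅B 1, B 0⁆ = B 0) (hZX : ⁅B 2, B 0⁆ = B 1) :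
    sl2Act B (B 0) (MvPolynomial.X 0) = -MvPolynomial.X 1 := by
  have hXY : ⁅B 0, B 1⁆ = -B 0 := by rw [← lie_skew, hYX]
  have hXZ : ⁅B 0, B 2⁆ = -B 1 := by rw [← lie_skew, hZX]
  simp [sl2Act_X, Fin.sum_univ_three, hXY, hXZ]

lemma sl2Act_X_Y (hYX : ⁅B 1, B 0⁆ = B 0) (hZX : ⁅B 2, B 0⁆ = B 1) :
    sl2Act B (B 0) (MvPolynomial.X 1) = -MvPolynomial.X 2 := by
  have hXY : ⁅B 0, B 1⁆ = -B 0 := by rw [← lie_skew, hYX]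
  have hXZ : ⁅B 0, B 2⁆ = -B 1 := by rw [← lie_skew, hZX]
  simp [sl2Act_X, Fin.sum_univ_three, hXY, hXZ]

lemma naiveAYD_eq_projCoact_sub (hYX : ⁅B 1, B 0⁆ = B 0)
    (hZX : ⁅B 2, B 0⁆ = B 1) (m : MvPolynomial (Fin 3) ℂ) :
    ⁅B 0, B 0⁆ ⊗ₜ[ℂ] (m * MvPolynomial.X 0) + ⁅B 1, B 0⁆ ⊗ₜ[ℂ] (m * MvPolynomial.X 1)
        + B 0 ⊗ₜ[ℂ] sl2Act B (B 0) (m * MvPolynomial.X 0)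
        + B 1 ⊗ₜ[ℂ] sl2Act B (B 0) (m * MvPolynomial.X 1)
      = projCoact B (sl2Act B (B 0) m) - B 1 ⊗ₜ[ℂ] (m * MvPolynomial.X 2) := by
  rw [sl2Act_mul, sl2Act_mul, sl2Act_X_X hYX hZX, sl2Act_X_Y hYX hZX, lie_self, hYX,
    projCoact_eq_koszulCoaction, koszulCoaction_apply, Fin.sum_univ_two]
  simp only [Matrix.cons_val_zero, Matrix.cons_val_one, mul_neg, zero_tmul, tmul_add, tmul_neg]
  abel

end sl2

theorem sl2_projected_coaction_not_AYD_general
    (B : Module.Basis (Fin 3) ℂ g)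
    -- sl₂ relations: X = B 0, Y = B 1, Z = B 2
    (hYX : ⁅B 1, B 0⁆ = B 0) (hZX : ⁅B 2, B 0⁆ = B 1) :
    -- ∇_{g₁} is a comodule structure:
    IsLieComodule (projCoact B) ∧
    -- the AYD compatibility over g₁ fails, with discrepancy `-Y ⊗ mθ^Z`:
    (∀ m : MvPolynomial (Fin 3) ℂ,
      ⁅B 0, B 0⁆ ⊗ₜ[ℂ] (m * MvPolynomial.X 0) + ⁅B 1, B 0⁆ ⊗ₜ[ℂ] (m * MvPolynomial.X 1)
        + (B 0) ⊗ₜ[ℂ] (sl2Act B (B 0) (m * MvPolynomial.X 0))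
        + (B 1) ⊗ₜ[ℂ] (sl2Act B (B 0) (m * MvPolynomial.X 1))
      = projCoact B (sl2Act B (B 0) m) - (B 1) ⊗ₜ[ℂ] (m * MvPolynomial.X 2)) ∧
    -- in particular, for `m = 1`, `∇_{g₁}(m ◁ X)` differs from the naive AYD RHS:
    (projCoact B (sl2Act B (B 0) 1) ≠
      ⁅B 0, B 0⁆ ⊗ₜ[ℂ] ((1 : MvPolynomial (Fin 3) ℂ) * MvPolynomial.X 0)
        + ⁅B 1, B 0⁆ ⊗ₜ[ℂ] ((1 : MvPolynomial (Fin 3) ℂ) * MvPolynomial.X 1)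
        + (B 0) ⊗ₜ[ℂ] (sl2Act B (B 0) ((1 : MvPolynomial (Fin 3) ℂ) * MvPolynomial.X 0))
        + (B 1) ⊗ₜ[ℂ] (sl2Act B (B 0) ((1 : MvPolynomial (Fin 3) ℂ) * MvPolynomial.X 1))) := by
  refine ⟨projCoact_eq_koszulCoaction B ▸ isLieComodule_koszulCoaction _ _,
    naiveAYD_eq_projCoact_sub hYX hZX, ?_⟩
  rw [naiveAYD_eq_projCoact_sub hYX hZX, Ne, eq_comm, sub_eq_self,
    Module.Basis.tmul_eq_zero_iff, one_mul]
  exact MvPolynomial.X_ne_zero 2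

theorem sl2_projected_coaction_not_AYD
    (B : Module.Basis (Fin 3) ℂ g)
    -- sl₂ relations: X = B 0, Y = B 1, Z = B 2
    (hYX : ⁅B 1, B 0⁆ = B 0) (hZX : ⁅B 2, B 0⁆ = B 1) (hZY : ⁅B 2, B 1⁆ = B 2) :
    -- ∇_{g₁} is a comodule structure:
    IsLieComodule (projCoact B) ∧
    -- the AYD compatibility over g₁ fails, with discrepancy `-Y ⊗ mθ^Z`:
    (∀ m : MvPolynomial (Fin 3) ℂ,
      ⁅B 0, B 0⁆ ⊗ₜ[ℂ] (m * MvPolynomial.X 0) + ⁅B 1, B 0⁆ ⊗ₜ[ℂ] (m * MvPolynomial.X 1)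
        + (B 0) ⊗ₜ[ℂ] (sl2Act B (B 0) (m * MvPolynomial.X 0))
        + (B 1) ⊗ₜ[ℂ] (sl2Act B (B 0) (m * MvPolynomial.X 1))
      = projCoact B (sl2Act B (B 0) m) - (B 1) ⊗ₜ[ℂ] (m * MvPolynomial.X 2)) ∧
    -- in particular, for `m = 1`, `∇_{g₁}(m ◁ X)` differs from the naive AYD RHS:
    (projCoact B (sl2Act B (B 0) 1) ≠
      ⁅B 0, B 0⁆ ⊗ₜ[ℂ] ((1 : MvPolynomial (Fin 3) ℂ) * MvPolynomial.X 0)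
        + ⁅B 1, B 0⁆ ⊗ₜ[ℂ] ((1 : MvPolynomial (Fin 3) ℂ) * MvPolynomial.X 1)
        + (B 0) ⊗ₜ[ℂ] (sl2Act B (B 0) ((1 : MvPolynomial (Fin 3) ℂ) * MvPolynomial.X 0))
        + (B 1) ⊗ₜ[ℂ] (sl2Act B (B 0) ((1 : MvPolynomial (Fin 3) ℂ) * MvPolynomial.X 1))) :=
  sl2_projected_coaction_not_AYD_general B hYX hZX

end
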